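/- For any tree T on n vertices, γ_o(T) ≤ γ_a(T) + n/6, where γ_a(T) and γ_o(T) are the global defensive and global offensive alliance numbers of T respectively. -/

import Mathlib

open SimpleGraph Finset
open scoped Classical

/-- The closed neighborhood `N[v]` of a vertex `v`. -/
noncomputable def closedNbhd {V : Type*} [Fintype V] (G : SimpleGraph V) (v : V) : Finset V :=
  insert v (Finset.univ.filter (fun u => G.Adj v u))

/-- `S` is a dominating set: every vertex outside `S` has a neighbor in `S`. -/
def Dominating {V : Type*} [Fintype V] (G : SimpleGraph V) (S : Finset V) : Prop :=
  ∀ v, v ∉ S → ∃ u ∈ S, G.Adj v u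

/-- `S` is a global defensive alliance. -/
def GlobalDefensiveAlliance {V : Type*} [Fintype V] (G : SimpleGraph V) (S : Finset V) : Prop :=
  Dominating G S ∧ ∀ v ∈ S, (closedNbhd G v \ S).card ≤ (closedNbhd G v ∩ S).card

/-- `S` is a global offensive alliance. -/
def GlobalOffensiveAlliance {V : Type*} [Fintype V] (G : SimpleGraph V) (S : Finset V) : Prop :=
  Dominating G S ∧ ∀ v, v ∉ S → (∃ u ∈ S, G.Adj v u) →
    (closedNbhd G v \ S).card ≤ (closedNbhd G v ∩ S).card

/-- Edges with both endpoints in `S`. -/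
noncomputable def edgesInside {V : Type*} [Fintype V] (G : SimpleGraph V) (S : Finset V) :
    Finset (Sym2 V) :=
  G.edgeFinset.filter (fun e => ∀ x ∈ e, x ∈ S)

/-- Edges with both endpoints outside `S`. -/
noncomputable def edgesOutside {V : Type*} [Fintype V] (G : SimpleGraph V) (S : Finset V) :
    Finset (Sym2 V) :=
  G.edgeFinset.filter (fun e => ∀ x ∈ e, x ∉ S)

/-- Edges with exactly one endpoint in `S`. -/
noncomputable def edgesBetween {V : Type*} [Fintype V] (G : SimpleGraph V) (S : Finset V) :
    Finset (Sym2 V) :=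
  G.edgeFinset.filter (fun e => (∃ x ∈ e, x ∈ S) ∧ (∃ x ∈ e, x ∉ S))

/-- The global defensive alliance number `γ_a(G)`. -/
noncomputable def gammaA {V : Type*} [Fintype V] (G : SimpleGraph V) : ℕ :=
  sInf {k | ∃ S : Finset V, GlobalDefensiveAlliance G S ∧ S.card = k}

/-- The global offensive alliance number `γ_o(G)`. -/
noncomputable def gammaO {V : Type*} [Fintype V] (G : SimpleGraph V) : ℕ :=
  sInf {k | ∃ S : Finset V, GlobalOffensiveAlliance G S ∧ S.card = k}

/-! Let `S` be a minimum global defensive alliance, `a = |S|`, and let `W` be the set of vertices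
outside `S` having a neighbour outside `S`. Counting edge endpoints (every vertex outside `S` has a
neighbour in `S`, every vertex of `S` has at most one more neighbour outside `S` than inside, and a
tree has `n - 1` edges) gives `3 (n - a) + |W| ≤ 2 (n - 1) + a`. A dominating set with no edge
outside it is a global offensive alliance, since every outside vertex then has all its neighbours
inside. Adding to `S` the smaller colour class of `W` in a 2-colouring of the tree gives such a set,
so `γ_o ≤ a + |W| / 2 ≤ 3a - n/2 - 1`; the smaller colour class of the whole tree gives
`γ_o ≤ n / 2`. The first bound proves the claim when `3a < n`, the second one otherwise. -/

lemma SimpleGraph.Coloring.apply_eq_of_adj_of_ne {V : Type*} {G : SimpleGraph V}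
    (C : G.Coloring (Fin 2)) {u v : V} {i : Fin 2} (huv : G.Adj u v) (hu : C u ≠ i) : C v = i := by
  have := C.valid huv
  omega

lemma exists_two_mul_card_filter_eq_le {V : Type*} (c : V → Fin 2) (W : Finset V) :
    ∃ i, 2 * #{v ∈ W | c v = i} ≤ #W := by
  have hsplit := card_filter_add_card_filter_not (s := W) (fun v => c v = 0)
  have hone : {v ∈ W | ¬c v = 0} = {v ∈ W | c v = 1} := by
    refine filter_congr fun v _ => ?_
    omega
  rw [hone] at hsplit
  by_cases h : 2 * #{v ∈ W | c v = 0} ≤ #W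
  · exact ⟨0, h⟩
  · exact ⟨1, by omega⟩

lemma sum_card_filter_adj_comm {V : Type*} (G : SimpleGraph V) (P Q : Finset V) :
    ∑ u ∈ P, #{v ∈ Q | G.Adj u v} = ∑ v ∈ Q, #{u ∈ P | G.Adj v u} := by
  simpa [bipartiteAbove, bipartiteBelow, adj_comm] using
    sum_card_bipartiteAbove_eq_sum_card_bipartiteBelow (r := G.Adj) (s := P) (t := Q)

section Alliances

variable {V : Type*} [Fintype V] {G : SimpleGraph V} {S T : Finset V} {v : V}

noncomputable def nonisolatedOutside (G : SimpleGraph V) (S : Finset V) : Finset V :=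
  {v ∈ Sᶜ | ∃ u ∉ S, G.Adj v u}

lemma Dominating.mono (hS : Dominating G S) (hST : S ⊆ T) : Dominating G T := fun v hv =>
  let ⟨u, hu, huv⟩ := hS v fun h => hv (hST h)
  ⟨u, hST hu, huv⟩

lemma Dominating.globalOffensiveAlliance (hS : Dominating G S) (hind : G.IsIndepSet ↑Sᶜ) :
    GlobalOffensiveAlliance G S := by
  refine ⟨hS, fun v hv ⟨u, hu, huv⟩ => ?_⟩
  have hout : closedNbhd G v \ S = {v} := by
    ext w
    simp only [closedNbhd, mem_sdiff, mem_insert, mem_filter, mem_univ, true_and, mem_singleton]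
    refine ⟨fun ⟨hw, hwS⟩ => hw.resolve_right fun hvw => ?_, fun hw => ⟨Or.inl hw, hw ▸ hv⟩⟩
    exact hind (by simpa using hv) (by simpa using hwS) (G.ne_of_adj hvw) hvw
  have hin : u ∈ closedNbhd G v ∩ S := by simp [closedNbhd, huv, hu]
  rw [hout, card_singleton]
  exact card_pos.2 ⟨u, hin⟩

lemma GlobalOffensiveAlliance.gammaO_le (hS : GlobalOffensiveAlliance G S) : gammaO G ≤ #S :=
  Nat.sInf_le ⟨S, hS, rfl⟩

lemma globalDefensiveAlliance_univ : GlobalDefensiveAlliance G univ :=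
  ⟨fun v hv => absurd (mem_univ v) hv, fun v _ => by simp [sdiff_eq_empty_iff_subset.2]⟩

lemma exists_globalDefensiveAlliance_card_eq_gammaA :
    ∃ S, GlobalDefensiveAlliance G S ∧ #S = gammaA G :=
  Nat.sInf_mem (s := {k | ∃ S, GlobalDefensiveAlliance G S ∧ #S = k})
    ⟨_, univ, globalDefensiveAlliance_univ, rfl⟩

lemma closedNbhd_sdiff_of_mem (hv : v ∈ S) : closedNbhd G v \ S = {u ∈ Sᶜ | G.Adj v u} := by
  ext u
  simp only [closedNbhd, mem_sdiff, mem_insert, mem_filter, mem_univ, true_and, mem_compl]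
  grind

lemma card_closedNbhd_inter_of_mem (hv : v ∈ S) :
    #(closedNbhd G v ∩ S) = #{u ∈ S | G.Adj v u} + 1 := by
  have : closedNbhd G v ∩ S = insert v {u ∈ S | G.Adj v u} := by
    ext u
    simp only [closedNbhd, mem_inter, mem_insert, mem_filter, mem_univ, true_and]
    grind
  rw [this, card_insert_of_notMem (by simp)]

lemma GlobalDefensiveAlliance.card_filter_adj_compl_le (hS : GlobalDefensiveAlliance G S)
    (hv : v ∈ S) : #{u ∈ Sᶜ | G.Adj v u} ≤ #{u ∈ S | G.Adj v u} + 1 := by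
  simpa [closedNbhd_sdiff_of_mem hv, card_closedNbhd_inter_of_mem hv] using hS.2 v hv

lemma card_filter_adj_add_card_filter_adj_compl (S : Finset V) (v : V) :
    #{u ∈ S | G.Adj v u} + #{u ∈ Sᶜ | G.Adj v u} = G.degree v := by
  rw [← card_neighborFinset_eq_degree,
    ← card_filter_add_card_filter_not (s := G.neighborFinset v) (· ∈ S)]
  congr 2 <;> ext u <;> simp [and_comm]

lemma Dominating.card_compl_le_sum (hS : Dominating G S) :
    #Sᶜ ≤ ∑ v ∈ Sᶜ, #{u ∈ S | G.Adj v u} := by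
  rw [card_eq_sum_ones]
  refine sum_le_sum fun v hv => card_pos.2 ?_
  obtain ⟨u, hu, huv⟩ := hS v (mem_compl.1 hv)
  exact ⟨u, mem_filter.2 ⟨hu, huv⟩⟩

lemma card_nonisolatedOutside_le_sum :
    #(nonisolatedOutside G S) ≤ ∑ v ∈ Sᶜ, #{u ∈ Sᶜ | G.Adj v u} :=
  calc #(nonisolatedOutside G S) = ∑ v ∈ nonisolatedOutside G S, 1 := card_eq_sum_ones _
    _ ≤ ∑ v ∈ nonisolatedOutside G S, #{u ∈ Sᶜ | G.Adj v u} := sum_le_sum fun v hv => by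
        obtain ⟨-, u, hu, huv⟩ := mem_filter.1 hv
        exact card_pos.2 ⟨u, mem_filter.2 ⟨mem_compl.2 hu, huv⟩⟩
    _ ≤ ∑ v ∈ Sᶜ, #{u ∈ Sᶜ | G.Adj v u} := sum_le_sum_of_subset (filter_subset _ _)

theorem GlobalDefensiveAlliance.three_mul_card_compl_add_card_nonisolatedOutside_le
    (hS : GlobalDefensiveAlliance G S) :
    3 * #Sᶜ + #(nonisolatedOutside G S) ≤ 2 * #G.edgeFinset + #S := by
  have hsplit (P : Finset V) : ∑ v ∈ P, G.degree v =
      ∑ v ∈ P, #{u ∈ S | G.Adj v u} + ∑ v ∈ P, #{u ∈ Sᶜ | G.Adj v u} := by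
    rw [← sum_add_distrib]
    exact sum_congr rfl fun v _ => (card_filter_adj_add_card_filter_adj_compl S v).symm
  have htotal : ∑ v ∈ S, G.degree v + ∑ v ∈ Sᶜ, G.degree v = 2 * #G.edgeFinset := by
    rw [sum_add_sum_compl, sum_degrees_eq_twice_card_edges]
  have hcross := sum_card_filter_adj_comm G S Sᶜ
  have hdefense : ∑ v ∈ S, #{u ∈ Sᶜ | G.Adj v u} ≤ ∑ v ∈ S, #{u ∈ S | G.Adj v u} + #S := by
    rw [card_eq_sum_ones S, ← sum_add_distrib]
    exact sum_le_sum fun v hv => hS.card_filter_adj_compl_le hv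
  have hdom := hS.1.card_compl_le_sum
  have hW := card_nonisolatedOutside_le_sum (G := G) (S := S)
  rw [hsplit, hsplit] at htotal
  omega

theorem two_mul_gammaO_le_of_dominating (hG : G.IsBipartite) (hS : Dominating G S) :
    2 * gammaO G ≤ 2 * #S + #(nonisolatedOutside G S) := by
  obtain ⟨C⟩ := hG
  obtain ⟨i, hi⟩ := exists_two_mul_card_filter_eq_le C (nonisolatedOutside G S)
  have hT : GlobalOffensiveAlliance G (S ∪ {v ∈ nonisolatedOutside G S | C v = i}) := by
    refine (hS.mono subset_union_left).globalOffensiveAlliance fun u hu v hv _ huv => ?_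
    simp only [coe_compl, Set.mem_compl_iff, mem_coe, mem_union, mem_filter, not_or,
      nonisolatedOutside, mem_compl, not_and] at hu hv
    exact hv.2 ⟨hv.1, u, hu.1, huv.symm⟩ (C.apply_eq_of_adj_of_ne huv (hu.2 ⟨hu.1, v, hv.1, huv⟩))
  calc 2 * gammaO G ≤ 2 * (#S + #{v ∈ nonisolatedOutside G S | C v = i}) := by
        gcongr
        exact hT.gammaO_le.trans (card_union_le _ _)
    _ ≤ 2 * #S + #(nonisolatedOutside G S) := by omega

theorem two_mul_gammaO_le_card [Nontrivial V] (hG : G.IsBipartite) (hc : G.Connected) :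
    2 * gammaO G ≤ Fintype.card V := by
  obtain ⟨C⟩ := hG
  obtain ⟨i, hi⟩ := exists_two_mul_card_filter_eq_le C univ
  have hX : GlobalOffensiveAlliance G {v ∈ univ | C v = i} := by
    refine Dominating.globalOffensiveAlliance (fun v hv => ?_) fun u hu v hv _ huv => ?_
    · obtain ⟨u, hvu⟩ := G.mem_support.1 (hc.preconnected.support_eq_univ ▸ Set.mem_univ v)
      simp only [mem_filter, mem_univ, true_and] at hv
      exact ⟨u, by simpa using C.apply_eq_of_adj_of_ne hvu hv, hvu⟩
    · simp only [coe_compl, coe_filter, Set.mem_compl_iff, mem_univ,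
        true_and] at hu hv
      exact hv (C.apply_eq_of_adj_of_ne huv hu)
  calc 2 * gammaO G ≤ 2 * #{v ∈ univ | C v = i} := by grw [hX.gammaO_le]
    _ ≤ Fintype.card V := hi

end Alliances

/-- For any tree on n vertices, γ_o(T) ≤ γ_a(T) + n/6. -/
theorem stmt_8 {V : Type*} [Fintype V] (G : SimpleGraph V) (hT : G.IsTree) :
    (gammaO G : ℝ) ≤ (gammaA G : ℝ) + (Fintype.card V : ℝ) / 6 := by
  obtain ⟨S, hS, hSa⟩ := exists_globalDefensiveAlliance_card_eq_gammaA (G := G)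
  have hcount := hS.three_mul_card_compl_add_card_nonisolatedOutside_le
  have hextend := two_mul_gammaO_le_of_dominating hT.isBipartite hS.1
  have hcolour (hn : 2 ≤ Fintype.card V) : 2 * gammaO G ≤ Fintype.card V :=
    have := Fintype.one_lt_card_iff_nontrivial.1 hn
    two_mul_gammaO_le_card hT.isBipartite hT.connected
  have hedges := hT.card_edgeFinset
  have hcompl := card_add_card_compl S
  -- `hcolour` covers `n ≤ 3a` for `n ≥ 2`; integrality settles `n = 1` from the other bounds.
  have key : 6 * gammaO G ≤ 6 * gammaA G + Fintype.card V := by omega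
  have key' : (6 * gammaO G : ℝ) ≤ 6 * gammaA G + Fintype.card V := by exact_mod_cast key
  linarith
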